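/- arXiv:2108.12158 — 4 statements merged into one kernel-verified Lean document; each statement's English description precedes it below -/
import Mathlib

section
/- Let ∇ : A → A be a k-linear map on a commutative associative algebra A. Then for all n ≥ 1 and all x, a₁,…,a_n ∈ A: Ψ^n_∇(a₁,…,a_n)(x) = Φ^{n+1}_∇(a₁,…,a_n, x) + x · Φ^n_∇(a₁,…,a_n). -/
/-- The deviations `Φ^n_∇`, arguments as `ℕ → A` on indices `0,…,n-1`. -/
def Phi {A : Type*} [NonUnitalCommRing A] (D : A → A) : ℕ → (ℕ → A) → A
  | 0, _ => 0
  | 1, a => D (a 0)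
  | (n+2), a =>
      Phi D (n+1) (Function.update a n (a n * a (n+1)))
        - Phi D (n+1) a * a (n+1)
        - Phi D (n+1) (Function.update a n (a (n+1))) * a n

/-- Left multiplication operator `L_a`. -/
def Lmul {A : Type*} [NonUnitalCommRing A] (a : A) : A → A := fun x => a * x

/-- Commutator of endomorphisms `[f,g] = f∘g − g∘f`. -/
def opComm {A : Type*} [NonUnitalCommRing A] (f g : A → A) : A → A :=
  fun x => f (g x) - g (f x)

/-- `Ψ^n_∇(a₁,…,a_n) = [⋯[[∇,L_{a₁}],L_{a₂}],…,L_{a_n}]`, arguments as `ℕ → A`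
on indices `0,…,n-1`. -/
def Psi {A : Type*} [NonUnitalCommRing A] (D : A → A) : ℕ → (ℕ → A) → A → A
  | 0, _ => D
  | (n+1), a => opComm (Psi D n a) (Lmul (a n))

lemma Phi_congr {A : Type*} [NonUnitalCommRing A] (D : A → A) :
    ∀ m (a b : ℕ → A), (∀ i, i < m → a i = b i) → Phi D m a = Phi D m b
  | 0, _, _, _ => rfl
  | 1, a, b, h => by simp [Phi, h 0 one_pos]
  | (n+2), a, b, h => by
    have h1 : a n = b n := h n (by omega)
    have h2 : a (n+1) = b (n+1) := h (n+1) (by omega)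
    simp only [Phi]
    rw [Phi_congr D (n+1) (Function.update a n (a n * a (n+1)))
          (Function.update b n (b n * b (n+1))) (by
        intro i hi
        rcases eq_or_ne i n with rfl | hne
        · simp [h1, h2]
        · simp [Function.update_of_ne hne, h i (by omega)]),
      Phi_congr D (n+1) a b (fun i hi => h i (by omega)),
      Phi_congr D (n+1) (Function.update a n (a (n+1)))
          (Function.update b n (b (n+1))) (by
        intro i hi
        rcases eq_or_ne i n with rfl | hne
        · simp [h2]
        · simp [Function.update_of_ne hne, h i (by omega)]),
      h1, h2]


lemma aux1 {A : Type*} [NonUnitalCommRing A] (d1 d2 d3 u x : A) :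
    d1 - u * d2 = d1 - d3 * x - d2 * u + x * d3 := by
  rw [mul_comm d2 u, mul_comm d3 x]; abel

lemma aux2 {A : Type*} [NonUnitalCommRing A] (P1 P2 Pn Pa u x : A) :
    P1 + u * x * Pn - u * (P2 + x * Pn) = P1 - Pa * x - P2 * u + x * Pa := by
  rw [mul_add, ← mul_assoc, mul_comm P2 u, mul_comm Pa x]; abel

/-- `Ψ^n_∇(a₁,…,a_n)(x) = Φ^{n+1}_∇(a₁,…,a_n,x) + x⬝Φ^n_∇(a₁,…,a_n)` for `n ≥ 1`. -/
theorem stmt4 {k : Type*} [Field k] [CharZero k]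
    {A : Type*} [NonUnitalCommRing A] [Module k A] [SMulCommClass k A A] [IsScalarTower k A A]
    (D : A →ₗ[k] A) (n : ℕ) (hn : 1 ≤ n) (a : ℕ → A) (x : A) :
    Psi (⇑D) n a x
      = Phi (⇑D) (n + 1) (Function.update a n x) + x * Phi (⇑D) n a := by
  induction n, hn using Nat.le_induction generalizing x with
  | base =>
    simp [Psi, Phi, opComm, Lmul, Function.update_self, Function.update_of_ne]
    apply aux1
  | succ n hn ih =>
    have hLHS : Psi (⇑D) (n+1) a x = Psi (⇑D) n a (a n * x) - a n * Psi (⇑D) n a x := by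
      simp [Psi, opComm, Lmul]
    rw [hLHS, ih (a n * x), ih x]
    set b := Function.update a (n+1) x with hb
    have hbn : b n = a n := Function.update_of_ne (by omega) _ _
    have hbn1 : b (n+1) = x := Function.update_self _ _ _
    have key : ∀ c : A, Phi (⇑D) (n+1) (Function.update b n c)
        = Phi (⇑D) (n+1) (Function.update a n c) := by
      intro c
      apply Phi_congr
      intro i hi
      rcases eq_or_ne i n with rfl | hne
      · simp
      · simp [Function.update_of_ne hne, hb, Function.update_of_ne (show i ≠ n+1 by omega)]
    have hba : Phi (⇑D) (n+1) b = Phi (⇑D) (n+1) a := by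
      apply Phi_congr
      intro i hi
      exact Function.update_of_ne (by omega) _ _
    show _ = Phi (⇑D) (n+1+1) b + x * Phi (⇑D) (n+1) a
    simp only [Phi, hbn, hbn1, key, hba]
    apply aux2
end

section
/- If A is a unital commutative associative algebra, then for every r ≥ 0, Der_r = {∇ ∈ Dif_r : ∇(1) = 0}; i.e., the order ≤ r derivations are exactly the order ≤ r differential operators annihilating the unit. -/
/-- `Der r` = derivations of order `≤ r`: maps with identically vanishing
`(r+1)`-st deviation. -/
def Der {A : Type*} [NonUnitalCommRing A] (r : ℕ) : Set (A → A) :=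
  {D | ∀ a : ℕ → A, Phi D (r + 1) a = 0}

/-- Differential operators, with a shifted index: `Dif (r+1)` is the space `Dif_r`
of the paper, and `Dif 0 = Dif_{-1} = {0}`.  `Dif_0` consists of the left
multiplications, and `Dif_r = {∇ | [∇,L_a] ∈ Dif_{r-1} for all a}`. -/
def Dif {A : Type*} [NonUnitalCommRing A] : ℕ → Set (A → A)
  | 0 => {f | f = 0}
  | 1 => {f | ∃ a : A, f = Lmul a}
  | (n+2) => {f | ∀ a : A, opComm f (Lmul a) ∈ Dif (n+1)}

section Aux

variable {A : Type*} [CommRing A]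

lemma phi_succ_succ (D : A → A) (n : ℕ) (a : ℕ → A) :
    Phi D (n+2) a = Phi D (n+1) (Function.update a n (a n * a (n+1)))
        - Phi D (n+1) a * a (n+1)
        - Phi D (n+1) (Function.update a n (a (n+1))) * a n := rfl

lemma mem_dif_succ_succ (f : A → A) (n : ℕ) :
    f ∈ Dif (n+2) ↔ ∀ a : A, opComm f (Lmul a) ∈ Dif (n+1) := Iff.rfl

/-- Prepend an element to a sequence. -/
def consSeq {A : Type*} (b : A) (a : ℕ → A) : ℕ → A
  | 0 => b
  | (i+1) => a i

omit [CommRing A] in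
lemma consSeq_update (b : A) (a : ℕ → A) (n : ℕ) (x : A) :
    consSeq b (Function.update a n x) = Function.update (consSeq b a) (n+1) x := by
  funext i
  cases i with
  | zero => simp [consSeq, Function.update_apply]
  | succ j => simp [consSeq, Function.update_apply]

/-- Key lemma: deviations of `E_b(x) = D(bx) - D(b)x - D(x)b` are deviations of `D`
with `b` prepended. -/
lemma phi_cons (D : A → A) (b : A) :
    ∀ (n : ℕ) (a : ℕ → A),
      Phi (fun x => D (b * x) - D b * x - D x * b) (n+1) a
        = Phi D (n+2) (consSeq b a) := by
  intro n
  induction n with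
  | zero =>
    intro a
    show D (b * a 0) - D b * a 0 - D (a 0) * b = _
    rw [phi_succ_succ D 0]
    simp [Phi, consSeq]
  | succ m ih =>
    intro a
    rw [phi_succ_succ _ m, phi_succ_succ D (m+1), ih, ih, ih,
      consSeq_update, consSeq_update]
    have h1 : consSeq b a (m+1) = a m := rfl
    have h2 : consSeq b a (m+2) = a (m+1) := rfl
    rw [h1, h2]

lemma phi_one (D : A → A) : ∀ n : ℕ, Phi D (n+1) (fun _ => (1:A)) = (-1)^n * D 1 := by
  intro n
  induction n with
  | zero => simp [Phi]
  | succ m ih =>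
    rw [phi_succ_succ D m]
    have hu : Function.update (fun _ => (1:A)) m (1:A) = fun _ => (1:A) := by
      funext i; simp [Function.update_apply]
    have hu' : Function.update (fun _ => (1:A)) m ((1:A) * 1) = fun _ => (1:A) := by
      rw [one_mul]; exact hu
    show Phi D (m+1) (Function.update (fun _ => (1:A)) m ((1:A) * 1))
        - Phi D (m+1) (fun _ => (1:A)) * 1
        - Phi D (m+1) (Function.update (fun _ => (1:A)) m (1:A)) * 1 = _
    rw [hu, hu', ih]
    ring

lemma zero_mem_dif : ∀ n : ℕ, (fun _ : A => (0:A)) ∈ Dif n := by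
  intro n
  induction n with
  | zero => show _ = 0; funext x; rfl
  | succ m ih =>
    cases m with
    | zero => exact ⟨0, by funext x; simp [Lmul]⟩
    | succ k =>
      rw [mem_dif_succ_succ]
      intro a
      have h : opComm (fun _ : A => (0:A)) (Lmul a) = fun _ : A => (0:A) := by
        funext x; simp [opComm, Lmul]
      rw [h]
      exact ih

lemma lmul_mem_dif (c : A) : ∀ n : ℕ, Lmul c ∈ Dif (n+1) := by
  intro n
  induction n with
  | zero => exact ⟨c, rfl⟩
  | succ m ih =>
    rw [mem_dif_succ_succ]
    intro a
    have h : opComm (Lmul c) (Lmul a) = fun _ : A => (0:A) := by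
      funext x; simp [opComm, Lmul]; ring
    rw [h]
    exact zero_mem_dif _

lemma dif_add : ∀ (n : ℕ) (f g : A → A), f ∈ Dif n → g ∈ Dif n →
    (fun x => f x + g x) ∈ Dif n := by
  intro n
  induction n with
  | zero =>
    intro f g hf hg
    have hf' : f = 0 := hf
    have hg' : g = 0 := hg
    show _ = 0
    funext x
    simp [hf', hg']
  | succ m ih =>
    cases m with
    | zero =>
      rintro f g ⟨a, rfl⟩ ⟨b, rfl⟩
      exact ⟨a + b, by funext x; simp [Lmul]; ring⟩
    | succ k =>
      intro f g hf hg
      rw [mem_dif_succ_succ]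
      intro a
      have h : opComm (fun x => f x + g x) (Lmul a)
          = fun x => opComm f (Lmul a) x + opComm g (Lmul a) x := by
        funext x; simp [opComm, Lmul]; ring
      rw [h]
      exact ih _ _ ((mem_dif_succ_succ f k).1 hf a) ((mem_dif_succ_succ g k).1 hg a)

lemma dif_sub : ∀ (n : ℕ) (f g : A → A), f ∈ Dif n → g ∈ Dif n →
    (fun x => f x - g x) ∈ Dif n := by
  intro n
  induction n with
  | zero =>
    intro f g hf hg
    have hf' : f = 0 := hf
    have hg' : g = 0 := hg
    show _ = 0
    funext x
    simp [hf', hg']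
  | succ m ih =>
    cases m with
    | zero =>
      rintro f g ⟨a, rfl⟩ ⟨b, rfl⟩
      exact ⟨a - b, by funext x; simp [Lmul]; ring⟩
    | succ k =>
      intro f g hf hg
      rw [mem_dif_succ_succ]
      intro a
      have h : opComm (fun x => f x - g x) (Lmul a)
          = fun x => opComm f (Lmul a) x - opComm g (Lmul a) x := by
        funext x; simp [opComm, Lmul]; ring
      rw [h]
      exact ih _ _ ((mem_dif_succ_succ f k).1 hf a) ((mem_dif_succ_succ g k).1 hg a)

lemma der_to_dif : ∀ (n : ℕ) (D : A → A),
    (∀ a : ℕ → A, Phi D (n+1) a = 0) → D ∈ Dif (n+1) := by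
  intro n
  induction n with
  | zero =>
    intro D h
    refine ⟨0, funext fun x => ?_⟩
    have hx := h (fun _ => x)
    simpa [Phi, Lmul] using hx
  | succ m ih =>
    intro D h
    rw [mem_dif_succ_succ]
    intro b
    have hE : (fun x => D (b * x) - D b * x - D x * b) ∈ Dif (m+1) := by
      apply ih
      intro a
      rw [phi_cons]
      exact h _
    have hsum := dif_add (m+1) _ _ hE (lmul_mem_dif (D b) m)
    have heq : opComm D (Lmul b)
        = fun x => (D (b * x) - D b * x - D x * b) + Lmul (D b) x := by
      funext x; simp [opComm, Lmul]; ring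
    rw [heq]
    exact hsum

lemma dif_to_der : ∀ (n : ℕ) (D : A → A), D ∈ Dif (n+1) → D 1 = 0 →
    ∀ a : ℕ → A, Phi D (n+1) a = 0 := by
  intro n
  induction n with
  | zero =>
    rintro D ⟨c, rfl⟩ h1 a
    have hc : c = 0 := by simpa [Lmul] using h1
    show Lmul c (a 0) = 0
    simp [Lmul, hc]
  | succ m ih =>
    intro D hD h1 a
    have hcons : consSeq (a 0) (fun i => a (i+1)) = a := by
      funext i; cases i <;> rfl
    rw [← hcons, ← phi_cons]
    have hE : (fun x => D (a 0 * x) - D (a 0) * x - D x * a 0) ∈ Dif (m+1) := by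
      have hc := (mem_dif_succ_succ D m).1 hD (a 0)
      have hs := dif_sub (m+1) _ _ hc (lmul_mem_dif (D (a 0)) m)
      have heq : (fun x => D (a 0 * x) - D (a 0) * x - D x * a 0)
          = fun x => opComm D (Lmul (a 0)) x - Lmul (D (a 0)) x := by
        funext x; simp [opComm, Lmul]; ring
      rw [heq]
      exact hs
    have hE1 : (fun x => D (a 0 * x) - D (a 0) * x - D x * a 0) 1 = 0 := by
      simp [h1]
    exact ih _ hE hE1 _

end Aux

/-- for a unital commutative algebra,
`Der_r = {∇ ∈ Dif_r | ∇(1) = 0}` (index shift: `Dif (r+1)` is the paper's `Dif_r`). -/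
theorem stmt13 {A : Type*} [CommRing A] (r : ℕ) :
    Der r = {f : A → A | f ∈ Dif (r + 1) ∧ f 1 = 0} := by
  ext f
  simp only [Der, Set.mem_setOf_eq]
  constructor
  · intro h
    refine ⟨der_to_dif r f h, ?_⟩
    have h1 := h (fun _ => 1)
    rw [phi_one] at h1
    rcases Nat.even_or_odd r with he | ho
    · simpa [he.neg_one_pow] using h1
    · simpa [ho.neg_one_pow, neg_eq_zero] using h1
  · rintro ⟨hf, h1⟩
    exact dif_to_der r f hf h1
end

section
/- If A is a unital commutative associative algebra, then for every r ≥ 0 there is a canonical k-linear isomorphism Dif_r ≅ Der_r ⊕ A, given by ∇ ↦ (∇ − L_{∇(1)}, ∇(1)) with inverse (θ, a) ↦ θ + L_a. -/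
section Aux
variable {A : Type*} [CommRing A]

/-- iterated commutators with left multiplications -/
def MC (D : A → A) (a : ℕ → A) : ℕ → (A → A)
  | 0 => D
  | (m+1) => opComm (MC D a m) (Lmul (a m))

lemma mc_congr (D : A → A) {a b : ℕ → A} (m : ℕ) (h : ∀ i < m, a i = b i) :
    MC D a m = MC D b m := by
  induction m with
  | zero => rfl
  | succ m ih =>
    simp only [MC]
    rw [ih (fun i hi => h i (hi.trans (Nat.lt_succ_self m))), h m (Nat.lt_succ_self m)]

lemma mc_shift (D : A → A) (a : ℕ → A) (m : ℕ) :
    MC D a (m+1) = MC (opComm D (Lmul (a 0))) (fun i => a (i+1)) m := by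
  induction m with
  | zero => rfl
  | succ m ih => simp only [MC] at *; rw [ih]

lemma mc_sub_lmul (f : A → A) (c : A) (a : ℕ → A) (m : ℕ) (x : A) :
    MC (fun y => f y - c * y) a m x = MC f a m x - MC (Lmul c) a m x := by
  induction m generalizing x with
  | zero => simp [MC, Lmul]
  | succ m ih => simp only [MC, opComm, Lmul]; rw [ih, ih]; ring

lemma mc_add_lmul (f : A → A) (c : A) (a : ℕ → A) (m : ℕ) (x : A) :
    MC (fun y => f y + c * y) a m x = MC f a m x + MC (Lmul c) a m x := by
  induction m generalizing x with
  | zero => simp [MC, Lmul]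
  | succ m ih => simp only [MC, opComm, Lmul]; rw [ih, ih]; ring

lemma mc_lmul (c : A) (a : ℕ → A) (m : ℕ) (x : A) : MC (Lmul c) a (m+1) x = 0 := by
  induction m generalizing x with
  | zero => simp only [MC, opComm, Lmul]; ring
  | succ m ih => simp only [MC, opComm, Lmul] at *; rw [ih, ih]; ring

lemma phi_congr (D : A → A) : ∀ (m : ℕ) (a b : ℕ → A), (∀ i < m, a i = b i) →
    Phi D m a = Phi D m b := by
  intro m
  induction m using Nat.strong_induction_on with
  | _ m ih =>
    match m with
    | 0 => intro a b h; rfl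
    | 1 => intro a b h; simp only [Phi]; rw [h 0 (by norm_num)]
    | (n+2) =>
      intro a b h
      have hn : a n = b n := h n (by omega)
      have hn1 : a (n+1) = b (n+1) := h (n+1) (by omega)
      have key : ∀ x y : A, x = y →
          Phi D (n+1) (Function.update a n x) = Phi D (n+1) (Function.update b n y) := by
        intro x y hxy
        refine ih (n+1) (by omega) _ _ ?_
        intro i hi
        rcases eq_or_ne i n with rfl | hne
        · simpa using hxy
        · rw [Function.update_of_ne hne, Function.update_of_ne hne]
          exact h i (by omega)
      simp only [Phi]
      rw [key _ _ (by rw [hn, hn1]), key _ _ hn1,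
        ih (n+1) (by omega) a b (fun i hi => h i (by omega)), hn, hn1]

/-- KEY: deviations in terms of iterated commutators evaluated at 1. -/
lemma phi_eq_mc (D : A → A) : ∀ (n : ℕ) (a : ℕ → A),
    Phi D (n+1) a = MC D a (n+1) 1
      + (-1:A)^n * (∏ i ∈ Finset.range (n+1), a i) * D 1 := by
  intro n
  induction n with
  | zero =>
    intro a
    show D (a 0) = opComm D (Lmul (a 0)) 1 + (-1:A)^0 * (∏ i ∈ Finset.range 1, a i) * D 1
    simp only [opComm, Lmul, pow_zero, Finset.prod_range_one, mul_one, one_mul]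
    ring
  | succ n ih =>
    intro a
    have e1 : MC D (Function.update a n (a n * a (n+1))) n = MC D a n :=
      mc_congr D n (fun i hi => Function.update_of_ne (Nat.ne_of_lt hi) _ _)
    have e2 : MC D (Function.update a n (a (n+1))) n = MC D a n :=
      mc_congr D n (fun i hi => Function.update_of_ne (Nat.ne_of_lt hi) _ _)
    have p1 : (∏ i ∈ Finset.range (n+1), Function.update a n (a n * a (n+1)) i)
        = (∏ i ∈ Finset.range n, a i) * (a n * a (n+1)) := by
      rw [Finset.prod_range_succ, Function.update_self]
      congr 1
      exact Finset.prod_congr rfl fun i hi =>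
        Function.update_of_ne (Nat.ne_of_lt (Finset.mem_range.mp hi)) _ _
    have p2 : (∏ i ∈ Finset.range (n+1), Function.update a n (a (n+1)) i)
        = (∏ i ∈ Finset.range n, a i) * (a (n+1)) := by
      rw [Finset.prod_range_succ, Function.update_self]
      congr 1
      exact Finset.prod_congr rfl fun i hi =>
        Function.update_of_ne (Nat.ne_of_lt (Finset.mem_range.mp hi)) _ _
    have hP : (∏ i ∈ Finset.range (n+2), a i)
        = (∏ i ∈ Finset.range n, a i) * a n * a (n+1) := by
      rw [Finset.prod_range_succ, Finset.prod_range_succ]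
    have unf : ∀ (c : ℕ → A) (m : ℕ), MC D c (m+1) = opComm (MC D c m) (Lmul (c m)) :=
      fun _ _ => rfl
    show Phi D (n+2) a = _
    simp only [Phi]
    rw [ih, ih, ih, p1, p2, hP, Finset.prod_range_succ]
    simp only [unf]
    rw [e1, e2]
    simp only [opComm, Lmul, Function.update_self, mul_one]
    ring

lemma der_succ {D : A → A} {r : ℕ} (h : D ∈ Der r) : D ∈ Der (r+1) := by
  intro a
  show Phi D (r+2) a = 0
  simp only [Phi]
  rw [h, h, h]
  ring

lemma mc_one (D : A → A) (m : ℕ) (x : A) : MC D (fun _ => (1:A)) (m+1) x = 0 := by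
  induction m generalizing x with
  | zero => simp [MC, opComm, Lmul]
  | succ m ih => simp only [MC, opComm, Lmul] at *; rw [ih, ih]; ring

lemma der_one_eq_zero {D : A → A} {r : ℕ} (h : D ∈ Der r) : D 1 = 0 := by
  have h0 := h (fun _ => (1:A))
  rw [phi_eq_mc] at h0
  rw [mc_one] at h0
  simp only [Finset.prod_const_one, zero_add, mul_one] at h0
  have h1 : ((-1:A)^r) * ((-1:A)^r * D 1) = 0 := by rw [h0]; ring
  rwa [← mul_assoc, ← pow_add, Even.neg_one_pow ⟨r, rfl⟩, one_mul] at h1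

lemma mem_dif_iff : ∀ (m : ℕ) (f : A → A),
    f ∈ Dif (m+1) ↔ ∀ (b : ℕ → A) (x : A), MC f b (m+1) x = 0 := by
  intro m
  induction m with
  | zero =>
    intro f
    constructor
    · rintro ⟨c, rfl⟩ b x; simp only [MC, opComm, Lmul]; ring
    · intro h
      refine ⟨f 1, funext fun x => ?_⟩
      have := h (fun _ => x) 1
      simp only [MC, opComm, Lmul, mul_one] at this
      simp only [Lmul]
      linear_combination this
  | succ m ih =>
    intro f
    constructor
    · intro h b x
      have := (ih (opComm f (Lmul (b 0)))).mp (h (b 0)) (fun i => b (i+1)) x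
      rw [mc_shift]
      exact this
    · intro h c
      rw [ih]
      intro b x
      have h2 := h (fun i => if i = 0 then c else b (i-1)) x
      rw [mc_shift] at h2
      simpa using h2

lemma dif_sub_lmul_mem_der {f : A → A} {r : ℕ} (h : f ∈ Dif (r+1)) :
    (fun x => f x - f 1 * x) ∈ Der r := by
  intro a
  rw [phi_eq_mc, mc_sub_lmul, mc_lmul, (mem_dif_iff r f).mp h a 1]
  ring

lemma der_add_lmul_mem_dif {θ : A → A} {r : ℕ} (h : θ ∈ Der r) (c : A) :
    (fun x => θ x + c * x) ∈ Dif (r+1) := by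
  rw [mem_dif_iff]
  intro b x
  rw [mc_add_lmul, mc_lmul]
  have hθ1 : θ 1 = 0 := der_one_eq_zero h
  have h1 : MC θ b (r+1) 1 = 0 := by
    have := h b
    rw [phi_eq_mc, hθ1, mul_zero, add_zero] at this
    exact this
  have h2 : MC θ (Function.update b (r+1) x) (r+2) 1 = 0 := by
    have := der_succ h (Function.update b (r+1) x)
    rw [phi_eq_mc, hθ1, mul_zero, add_zero] at this
    exact this
  have e1 : MC θ (Function.update b (r+1) x) (r+1) = MC θ b (r+1) :=
    mc_congr θ (r+1) fun i hi => Function.update_of_ne (Nat.ne_of_lt hi) _ _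
  have unf : ∀ (c : ℕ → A), MC θ c (r+2) = opComm (MC θ c (r+1)) (Lmul (c (r+1))) :=
    fun _ => rfl
  rw [unf, e1, Function.update_self] at h2
  simp only [opComm, Lmul, mul_one, h1, mul_zero, sub_zero] at h2
  rw [h2]
  ring

end Aux

/-- for a unital commutative algebra there is a canonical bijection
`Dif_r ≅ Der_r × A`, `∇ ↦ (∇ − L_{∇(1)}, ∇(1))`, with inverse `(θ,a) ↦ θ + L_a`
(index shift: `Dif (r+1)` is the paper's `Dif_r`). -/
theorem stmt14 {A : Type*} [CommRing A] (r : ℕ) :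
    ∃ e : {f : A → A // f ∈ Dif (r + 1)} ≃ {f : A → A // f ∈ Der r} × A,
      (∀ f, ((e f).1.1 = fun x => f.1 x - f.1 1 * x) ∧ (e f).2 = f.1 1) ∧
      (∀ p, (e.symm p).1 = fun x => p.1.1 x + p.2 * x) := by
  refine ⟨{ toFun := fun f => (⟨fun x => f.1 x - f.1 1 * x, dif_sub_lmul_mem_der f.2⟩, f.1 1),
            invFun := fun p => ⟨fun x => p.1.1 x + p.2 * x, der_add_lmul_mem_dif p.1.2 p.2⟩,
            left_inv := ?_, right_inv := ?_ }, fun f => ⟨rfl, rfl⟩, fun p => rfl⟩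
  · rintro ⟨f, hf⟩
    apply Subtype.ext
    funext x
    simp
  · rintro ⟨⟨θ, hθ⟩, c⟩
    have hθ1 : θ 1 = 0 := der_one_eq_zero hθ
    refine Prod.ext (Subtype.ext (funext fun x => ?_)) ?_
    · simp [hθ1]
    · simp [hθ1]
end

section
/- There exists a commutative associative algebra A (for instance any k-vector space of dimension ≥ 2 with the zero multiplication) for which [dif_0, dif_0] ⊄ dif_{-1} = 0, i.e., the commutator estimate [dif_m, dif_n] ⊆ dif_{m+n−1} fails for non-unital algebras. -/
/-- `dif r` = maps whose `(r+1)`-fold iterated commutator with left multiplications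
vanishes identically. -/
def dif {A : Type*} [NonUnitalCommRing A] (r : ℕ) : Set (A → A) :=
  {D | ∀ a : ℕ → A, Psi D (r + 1) a = 0}

/-- `ℤ × ℤ` with the zero multiplication. -/
def Z2 : Type := ℤ × ℤ

instance : AddCommGroup Z2 := inferInstanceAs (AddCommGroup (ℤ × ℤ))

instance Z2ring : NonUnitalCommRing Z2 where
  mul _ _ := ((0 : ℤ), (0 : ℤ))
  left_distrib _ _ _ := by show ((0:ℤ),(0:ℤ)) = ((0:ℤ),(0:ℤ)) + ((0:ℤ),(0:ℤ)); simp
  right_distrib _ _ _ := by show ((0:ℤ),(0:ℤ)) = ((0:ℤ),(0:ℤ)) + ((0:ℤ),(0:ℤ)); simp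
  zero_mul _ := rfl
  mul_zero _ := rfl
  mul_assoc _ _ _ := rfl
  mul_comm _ _ := rfl

lemma Z2mul (a b : Z2) : a * b = 0 := by
  show ((0 : ℤ), (0 : ℤ)) = (0 : Z2)
  rfl

lemma memdif0 (D : Z2 → Z2) (h : D 0 = 0) : D ∈ @dif Z2 Z2ring 0 := by
  intro a
  funext x
  show D (a 0 * x) - a 0 * D x = 0
  rw [Z2mul, Z2mul, h, sub_zero]

/-- there is a (non-unital) commutative algebra for which the
commutator estimate fails in the lowest case: some `f, g ∈ dif_0` do not commute,
so `[dif_0, dif_0] ⊄ dif_{-1} = 0`. -/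
theorem stmt16 :
    ∃ (A : Type) (inst : NonUnitalCommRing A) (f g : A → A),
      f ∈ @dif A inst 0 ∧ g ∈ @dif A inst 0 ∧ ∃ x : A, f (g x) ≠ g (f x) := by
  refine ⟨Z2, Z2ring, fun p => (p.2, p.1), fun p => (p.1, 0), ?_, ?_, (1, 1), ?_⟩
  · exact memdif0 _ rfl
  · exact memdif0 _ rfl
  · intro h
    have : ((1 : ℤ), (0 : ℤ)) = ((0 : ℤ), (1 : ℤ)) := h.symm
    simp at this
end
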